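/- (Sharpness of the order Υ in the L²-estimate of Lemma 2: the shifted-disc example of Remark 4, claim ‖u−u_r‖_Ω = √π·Υ + O(Υ³).) There exists a constant C > 0 such that for all Υ ∈ (0,1): | ∫_Ω (u(x) − u_r(x))² dx − πΥ² | ≤ C·Υ³. -/

import Mathlib

open MeasureTheory Set Real

/-- A point of the Euclidean plane given by its two coordinates. -/
noncomputable def pt2 (a b : ℝ) : EuclideanSpace ℝ (Fin 2) :=
  (WithLp.equiv 2 (Fin 2 → ℝ)).symm ![a, b]

/-- Centre `(Υ, 0)` of the shifted disc. -/
noncomputable def ctr (Υ : ℝ) : EuclideanSpace ℝ (Fin 2) := pt2 Υ 0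

/-- The solution `u(x) = 1 − ‖x‖²` on the unit disc, extended by zero. -/
noncomputable def uSol (x : EuclideanSpace ℝ (Fin 2)) : ℝ :=
  if ‖x‖ < 1 then 1 - ‖x‖^2 else 0

/-- The solution `u_r(x) = 1 − ‖x − (Υ,0)‖²` on the shifted disc, extended by zero. -/
noncomputable def urSol (Υ : ℝ) (x : EuclideanSpace ℝ (Fin 2)) : ℝ :=
  if ‖x - ctr Υ‖ < 1 then 1 - ‖x - ctr Υ‖^2 else 0

/-!
On `Ω ∩ Ω_r` the difference `u - u_r = ‖x - (Υ,0)‖² - ‖x‖² = Υ² - 2Υx₀` is affine in `x`, and its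
square integrates over the unit disc to `πΥ² + πΥ⁴`, since `∫ x₀ = 0` and `∫ x₀² = π/4` by symmetry
and polar coordinates. On the lune `Ω \ Ω_r` both `u - u_r` and `Υ² - 2Υx₀` lie in `[0, 3Υ]`, so the
two squares differ by at most `9Υ²` there. The lune has area at most `πΥ`, because it misses the
disc of radius `1 - Υ/2` about `(Υ/2, 0)`, which lies in both discs.
-/

open Metric

theorem setIntegral_ball_zero_comp_linearIsometryEquiv {E F : Type*} [NormedAddCommGroup E]
    [InnerProductSpace ℝ E] [FiniteDimensional ℝ E] [MeasurableSpace E] [BorelSpace E]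
    [NormedAddCommGroup F] [NormedSpace ℝ F] (e : E ≃ₗᵢ[ℝ] E) (f : E → F) (r : ℝ) :
    ∫ x in ball 0 r, f (e x) = ∫ x in ball 0 r, f x := by
  have hpre : e ⁻¹' ball 0 r = ball 0 r := by ext; simp
  conv_lhs => rw [← hpre]
  exact e.measurePreserving.setIntegral_preimage_emb e.toMeasurableEquiv.measurableEmbedding f _

theorem abs_setIntegral_sub_setIntegral_le {α : Type*} [MeasurableSpace α] {μ : Measure α}
    {s t : Set α} {f g : α → ℝ} {M : ℝ} (hs : MeasurableSet s) (hst : μ (s \ t) < ⊤)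
    (hf : IntegrableOn f s μ) (hg : IntegrableOn g s μ) (heq : ∀ x ∈ s ∩ t, f x = g x)
    (hle : ∀ x ∈ s \ t, |f x - g x| ≤ M) :
    |∫ x in s, f x ∂μ - ∫ x in s, g x ∂μ| ≤ M * μ.real (s \ t) := by
  rw [← integral_sub hf hg, setIntegral_eq_of_subset_of_forall_sdiff_eq_zero hs sdiff_subset
    fun x ⟨hx, hxt⟩ => sub_eq_zero.2 (heq x ⟨hx, by_contra fun h => hxt ⟨hx, h⟩⟩)]
  simpa only [Real.norm_eq_abs] using
    norm_setIntegral_le_of_norm_le_const (f := fun x => f x - g x) hst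
      (by simpa only [Real.norm_eq_abs] using hle)

theorem Continuous.integrableOn_ball {X E : Type*} [MetricSpace X] [ProperSpace X]
    [MeasurableSpace X] [OpensMeasurableSpace X] {μ : Measure X} [IsFiniteMeasureOnCompacts μ]
    [NormedAddCommGroup E] {f : X → E} (hf : Continuous f) (x : X) (r : ℝ) :
    IntegrableOn f (ball x r) μ :=
  (hf.continuousOn.integrableOn_compact (isCompact_closedBall x r)).mono_set ball_subset_closedBall

local notation "ℝ²" => EuclideanSpace ℝ (Fin 2)

theorem measureReal_ball_fin_two (x : ℝ²) {r : ℝ} (hr : 0 ≤ r) :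
    volume.real (ball x r) = π * r ^ 2 := by
  simp [measureReal_def, ENNReal.toReal_ofReal hr, pi_nonneg, mul_comm]

theorem measureReal_ball_sdiff_ball_le (x y : ℝ²) {r : ℝ} (hr : 0 ≤ r) :
    volume.real (ball x r \ ball y r) ≤ π * r * dist x y := by
  rcases lt_or_ge (2 * r) (dist x y) with hfar | hnear
  · calc volume.real (ball x r \ ball y r) ≤ volume.real (ball x r) :=
          measureReal_mono sdiff_subset
      _ = π * r * r := by rw [measureReal_ball_fin_two x hr]; ring
      _ ≤ π * r * dist x y := by gcongr; linarith
  · set s := r - dist x y / 2 with hs_def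
    have hs : 0 ≤ s := by linarith
    have hsub : ball (midpoint ℝ x y) s ⊆ ball x r ∩ ball y r :=
      subset_inter
        (ball_subset_ball' (by rw [dist_midpoint_left, Real.norm_two]; linarith))
        (ball_subset_ball' (by rw [dist_midpoint_right, Real.norm_two]; linarith))
    calc volume.real (ball x r \ ball y r)
        ≤ volume.real (ball x r \ ball (midpoint ℝ x y) s) :=
          measureReal_mono (sdiff_subset_sdiff_right fun z hz => (hsub hz).2)
            ((measure_mono sdiff_subset).trans_lt measure_ball_lt_top).ne
      _ = π * r ^ 2 - π * s ^ 2 := by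
          rw [measureReal_sdiff (fun z hz => (hsub hz).1) measurableSet_ball,
            measureReal_ball_fin_two _ hr, measureReal_ball_fin_two _ hs]
      _ ≤ π * r * dist x y := by
          rw [hs_def]
          nlinarith [mul_nonneg pi_pos.le (sq_nonneg (dist x y))]

theorem integral_ball_zero_apply {ι : Type*} [Fintype ι] (i : ι) (r : ℝ) :
    ∫ x : EuclideanSpace ℝ ι in ball 0 r, x i = 0 := by
  have h := setIntegral_ball_zero_comp_linearIsometryEquiv (LinearIsometryEquiv.neg ℝ)
    (fun x : EuclideanSpace ℝ ι => x i) r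
  simp only [LinearIsometryEquiv.coe_neg, PiLp.neg_apply, integral_neg] at h
  linarith

theorem integral_ball_zero_norm_sq {r : ℝ} (hr : 0 ≤ r) :
    ∫ x : ℝ² in ball 0 r, ‖x‖ ^ 2 = π * r ^ 4 / 2 := by
  have hball : ball (0 : ℝ²) r = (‖·‖) ⁻¹' Iio r := by ext; simp
  rw [← integral_indicator measurableSet_ball, hball]
  simp_rw [← Function.comp_apply (f := fun y : ℝ => y ^ 2) (g := (‖·‖)), indicator_comp_right]
  rw [integral_fun_norm_addHaar volume, finrank_euclideanSpace_fin,
    measureReal_ball_fin_two 0 zero_le_one]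
  have hrad : ∫ y in Ioi (0 : ℝ), y ^ (2 - 1) • (Iio r).indicator (fun y => y ^ 2) y
      = r ^ 4 / 4 := by
    simp only [smul_eq_mul, ← indicator_mul_right (Iio r) (fun y : ℝ => y ^ (2 - 1))]
    rw [setIntegral_indicator measurableSet_Iio, Ioi_inter_Iio, ← integral_Ioc_eq_integral_Ioo,
      ← intervalIntegral.integral_of_le hr]
    have hcube : ∀ y : ℝ, y ^ (2 - 1) * y ^ 2 = y ^ 3 := fun y => by ring
    simp only [hcube, integral_pow]
    ring
  rw [hrad]
  simp only [smul_eq_mul]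
  ring

theorem integral_ball_zero_apply_zero_sq {r : ℝ} (hr : 0 ≤ r) :
    ∫ x : ℝ² in ball 0 r, x 0 ^ 2 = π * r ^ 4 / 4 := by
  have hswap : ∫ x : ℝ² in ball 0 r, x 1 ^ 2 = ∫ x : ℝ² in ball 0 r, x 0 ^ 2 := by
    simpa using setIntegral_ball_zero_comp_linearIsometryEquiv
      (LinearIsometryEquiv.piLpCongrLeft 2 ℝ ℝ (Equiv.swap (0 : Fin 2) 1))
      (fun x : ℝ² => x 0 ^ 2) r
  have hsum : (∫ x : ℝ² in ball 0 r, x 0 ^ 2) + ∫ x : ℝ² in ball 0 r, x 1 ^ 2 = π * r ^ 4 / 2 := by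
    rw [← integral_ball_zero_norm_sq hr,
      ← integral_add (Continuous.integrableOn_ball (by fun_prop) 0 r)
        (Continuous.integrableOn_ball (by fun_prop) 0 r)]
    simp [EuclideanSpace.real_norm_sq_eq, Fin.sum_univ_two]
  linarith

theorem integral_ball_zero_one_add_mul_apply_zero_sq (a b : ℝ) :
    ∫ x : ℝ² in ball 0 1, (a + b * x 0) ^ 2 = π * a ^ 2 + π / 4 * b ^ 2 := by
  have hexp : ∀ x : ℝ², (a + b * x 0) ^ 2 = a ^ 2 + (2 * a * b * x 0 + b ^ 2 * x 0 ^ 2) :=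
    fun x => by ring
  have hint {f : ℝ² → ℝ} (hf : Continuous f) : IntegrableOn f (ball 0 1) :=
    hf.integrableOn_ball 0 1
  simp_rw [hexp]
  rw [integral_add (hint (by fun_prop)) (hint (by fun_prop)),
    integral_add (hint (by fun_prop)) (hint (by fun_prop)),
    integral_const_mul, integral_const_mul, integral_ball_zero_apply,
    integral_ball_zero_apply_zero_sq zero_le_one, setIntegral_const,
    measureReal_ball_fin_two 0 zero_le_one]
  simp only [smul_eq_mul]
  ring

theorem ctr_apply_zero (Υ : ℝ) : ctr Υ 0 = Υ := rfl

theorem ctr_apply_one (Υ : ℝ) : ctr Υ 1 = 0 := rfl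

theorem norm_ctr (Υ : ℝ) : ‖ctr Υ‖ = |Υ| := by
  simp [EuclideanSpace.norm_eq, Fin.sum_univ_two, ctr_apply_zero, ctr_apply_one, sqrt_sq_eq_abs]

theorem norm_sub_ctr_sq (Υ : ℝ) (x : ℝ²) : ‖x - ctr Υ‖ ^ 2 = ‖x‖ ^ 2 - 2 * Υ * x 0 + Υ ^ 2 := by
  simp only [EuclideanSpace.real_norm_sq_eq, Fin.sum_univ_two, PiLp.sub_apply, ctr_apply_zero,
    ctr_apply_one]
  ring

theorem uSol_eq_max (x : ℝ²) : uSol x = max (1 - ‖x‖ ^ 2) 0 := by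
  unfold uSol
  split_ifs with hx
  · exact (max_eq_left (by nlinarith [norm_nonneg x])).symm
  · exact (max_eq_right (by nlinarith)).symm

@[fun_prop]
theorem continuous_uSol : Continuous uSol := by
  simp_rw [funext uSol_eq_max]
  fun_prop

@[fun_prop]
theorem continuous_urSol (Υ : ℝ) : Continuous (urSol Υ) :=
  continuous_uSol.comp (continuous_sub_right _)

theorem uSol_sub_urSol_of_norm_lt {Υ : ℝ} {x : ℝ²} (hx : ‖x‖ < 1) (hxc : ‖x - ctr Υ‖ < 1) :
    uSol x - urSol Υ x = Υ ^ 2 - 2 * Υ * x 0 := by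
  rw [uSol, urSol, if_pos hx, if_pos hxc, norm_sub_ctr_sq]
  ring

theorem abs_sq_uSol_sub_urSol_sub_sq_le {Υ : ℝ} (hΥ0 : 0 ≤ Υ) (hΥ1 : Υ ≤ 1) {x : ℝ²}
    (hx : ‖x‖ < 1) (hxc : 1 ≤ ‖x - ctr Υ‖) :
    |(uSol x - urSol Υ x) ^ 2 - (Υ ^ 2 - 2 * Υ * x 0) ^ 2| ≤ 9 * Υ ^ 2 := by
  have hu : uSol x - urSol Υ x = 1 - ‖x‖ ^ 2 := by
    rw [uSol, urSol, if_pos hx, if_neg hxc.not_gt, sub_zero]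
  have hx0 : |x 0| ≤ 1 := (PiLp.norm_apply_le x 0).trans hx.le
  have hu0 : 0 ≤ 1 - ‖x‖ ^ 2 := by nlinarith [norm_nonneg x]
  have hug : 1 - ‖x‖ ^ 2 ≤ Υ ^ 2 - 2 * Υ * x 0 := by
    nlinarith [norm_sub_ctr_sq Υ x, norm_nonneg (x - ctr Υ)]
  have hg : Υ ^ 2 - 2 * Υ * x 0 ≤ 3 * Υ := by
    nlinarith [abs_le.mp hx0, mul_le_mul_of_nonneg_left hΥ1 hΥ0]
  rw [hu, abs_le]
  constructor <;> nlinarith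

/-- Sharpness of the order `Υ` in the L²-estimate of Lemma 2:
the shifted-disc example of Remark 4, `‖u−u_r‖_Ω = √π·Υ + O(Υ³)`. -/
theorem shifted_disc_L2_sharpness :
    ∃ C : ℝ, 0 < C ∧ ∀ Υ ∈ Ioo (0:ℝ) 1,
      |(∫ x in Metric.ball (0 : EuclideanSpace ℝ (Fin 2)) 1,
          (uSol x - urSol Υ x)^2) - π * Υ^2| ≤ C * Υ^3 := by
  refine ⟨10 * π, by positivity, fun Υ ⟨hΥ0, hΥ1⟩ => ?_⟩
  have hmain : ∫ x : ℝ² in ball 0 1, (Υ ^ 2 - 2 * Υ * x 0) ^ 2 = π * Υ ^ 2 + π * Υ ^ 4 := by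
    simp_rw [sub_eq_add_neg, ← neg_mul, integral_ball_zero_one_add_mul_apply_zero_sq]
    ring
  have hlune : volume.real (ball 0 1 \ ball (ctr Υ) 1) ≤ π * Υ := by
    simpa [norm_ctr, abs_of_pos hΥ0] using measureReal_ball_sdiff_ball_le 0 (ctr Υ) zero_le_one
  have herr : |(∫ x in ball 0 1, (uSol x - urSol Υ x) ^ 2)
      - ∫ x : ℝ² in ball 0 1, (Υ ^ 2 - 2 * Υ * x 0) ^ 2|
      ≤ 9 * Υ ^ 2 * volume.real (ball 0 1 \ ball (ctr Υ) 1) :=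
    abs_setIntegral_sub_setIntegral_le measurableSet_ball
      ((measure_mono sdiff_subset).trans_lt measure_ball_lt_top)
      (Continuous.integrableOn_ball (by fun_prop) 0 1)
      (Continuous.integrableOn_ball (by fun_prop) 0 1)
      (fun x ⟨hx, hxc⟩ => by
        rw [uSol_sub_urSol_of_norm_lt (mem_ball_zero_iff.mp hx) (mem_ball_iff_norm.mp hxc)])
      (fun x ⟨hx, hxc⟩ => abs_sq_uSol_sub_urSol_sub_sq_le hΥ0.le hΥ1.le
        (mem_ball_zero_iff.mp hx) (not_lt.mp (mt mem_ball_iff_norm.mpr hxc)))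
  calc _ = |((∫ x in ball 0 1, (uSol x - urSol Υ x) ^ 2)
          - ∫ x : ℝ² in ball 0 1, (Υ ^ 2 - 2 * Υ * x 0) ^ 2) + π * Υ ^ 4| := by
        rw [hmain]; ring_nf
    _ ≤ 9 * Υ ^ 2 * (π * Υ) + π * Υ ^ 3 := by
        grw [abs_add_le, herr, hlune, abs_of_pos (by positivity : 0 < π * Υ ^ 4),
          pow_le_pow_of_le_one hΥ0.le hΥ1.le (by norm_num : 3 ≤ 4)]
    _ = 10 * π * Υ ^ 3 := by ring
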